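/- Let H = ⟨x, b, y₁,…,yₙ | [xᵏ,b]u⟩ with k, n ≥ 1 and u a non-trivial reduced word in y₁,…,yₙ. Then the subgroup H̃ of H generated by x and b is free of rank 2, and H decomposes as the amalgamated product H = H̃ *_{[xᵏ,b]=u⁻¹} F, where F is the free group on y₁,…,yₙ, amalgamating the infinite cyclic subgroup generated by [xᵏ,b] in H̃ with the infinite cyclic subgroup generated by u⁻¹ in F. -/

import Mathlib

/-! Common setup: the one-relator group `H = ⟨x, b, y₁, …, yₙ | [xᵏ,b]u⟩`, where generators are
indexed by `Bool ⊕ Fin n` (`Sum.inl true ↦ x`, `Sum.inl false ↦ b`, `Sum.inr m ↦ yₘ`),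
`[xᵏ,b] = x⁻ᵏb⁻¹xᵏb`, and `u` is the image of a word `u'` in the letters `y₁, …, yₙ`. -/

/-- The single relator `[xᵏ,b]u` of `H`. -/
def relOfH (k n : ℕ) (u' : FreeGroup (Fin n)) : Set (FreeGroup (Bool ⊕ Fin n)) :=
  {((FreeGroup.of (Sum.inl true))⁻¹) ^ k * (FreeGroup.of (Sum.inl false))⁻¹ *
    (FreeGroup.of (Sum.inl true)) ^ k * FreeGroup.of (Sum.inl false) *
    FreeGroup.map Sum.inr u'}

/-- The one-relator group `H = ⟨x, b, y₁, …, yₙ | [xᵏ,b]u⟩`. -/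
abbrev Hgp (k n : ℕ) (u' : FreeGroup (Fin n)) : Type :=
  PresentedGroup (relOfH k n u')

/-- The generator `x` of `H`. -/
def xg (k n : ℕ) (u' : FreeGroup (Fin n)) : Hgp k n u' := PresentedGroup.of (Sum.inl true)

/-- The generator `b` of `H`. -/
def bg (k n : ℕ) (u' : FreeGroup (Fin n)) : Hgp k n u' := PresentedGroup.of (Sum.inl false)

/-- The generator `yₘ` of `H`. -/
def yg (k n : ℕ) (u' : FreeGroup (Fin n)) (m : Fin n) : Hgp k n u' :=
  PresentedGroup.of (Sum.inr m)

/-- For `g ∈ H` and `i ∈ ℤ`, the element `g_i := x⁻ⁱ g xⁱ`. -/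
def cj (k n : ℕ) (u' : FreeGroup (Fin n)) (i : ℤ) (g : Hgp k n u') : Hgp k n u' :=
  xg k n u' ^ (-i) * g * xg k n u' ^ i

/-- The element `b_i = x⁻ⁱ b xⁱ`. -/
def bi (k n : ℕ) (u' : FreeGroup (Fin n)) (i : ℤ) : Hgp k n u' := cj k n u' i (bg k n u')

/-- The element `y_{m,i} = x⁻ⁱ yₘ xⁱ`. -/
def yi (k n : ℕ) (u' : FreeGroup (Fin n)) (m : Fin n) (i : ℤ) : Hgp k n u' :=
  cj k n u' i (yg k n u' m)

/-- The element `u_i = x⁻ⁱ u xⁱ`, where `u` is the image of `u'` in `H`. -/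
def ui (k n : ℕ) (u' : FreeGroup (Fin n)) (i : ℤ) : Hgp k n u' :=
  cj k n u' i (FreeGroup.lift (yg k n u') u')

/-- The subgroup `G_{i,∞} = ⟨G_l : l ≥ i⟩` of `H`, generated by all `b_j`, `y_{m,j}` with
`j ≥ i`. -/
def Gge (k n : ℕ) (u' : FreeGroup (Fin n)) (i : ℤ) : Subgroup (Hgp k n u') :=
  Subgroup.closure
    ({g | ∃ j, i ≤ j ∧ g = bi k n u' j} ∪ {g | ∃ m j, i ≤ j ∧ g = yi k n u' m j})

/-- The subgroup `G_{−∞,i} = ⟨G_l : l ≤ i⟩` of `H`, generated by all `b_j`, `y_{m,j}` with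
`j ≤ i`. -/
def Gle (k n : ℕ) (u' : FreeGroup (Fin n)) (i : ℤ) : Subgroup (Hgp k n u') :=
  Subgroup.closure
    ({g | ∃ j, j ≤ i ∧ g = bi k n u' j} ∪ {g | ∃ m j, j ≤ i ∧ g = yi k n u' m j})

/-- `a` is the α-limit of `r`: the largest index `i` with `r ∈ G_{i,∞}`. -/
def IsAlphaLimit (k n : ℕ) (u' : FreeGroup (Fin n)) (r : Hgp k n u') (a : ℤ) : Prop :=
  r ∈ Gge k n u' a ∧ ∀ i, r ∈ Gge k n u' i → i ≤ a

/-- `w` is the ω-limit of `r`: the smallest index `i` with `r ∈ G_{−∞,i}`. -/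
def IsOmegaLimit (k n : ℕ) (u' : FreeGroup (Fin n)) (r : Hgp k n u') (w : ℤ) : Prop :=
  r ∈ Gle k n u' w ∧ ∀ i, r ∈ Gle k n u' i → w ≤ i

/-- The property that `φ : H →* Multiplicative ℤ` is the exponent-sum-in-`x` homomorphism. -/
def IsExpSum (k n : ℕ) (u' : FreeGroup (Fin n))
    (φ : Hgp k n u' →* Multiplicative ℤ) : Prop :=
  φ (xg k n u') = Multiplicative.ofAdd 1 ∧ φ (bg k n u') = 1 ∧ ∀ m, φ (yg k n u' m) = 1

/-- The normal closure, in the subgroup `N ≤ H`, of a subset `S ⊆ N`, viewed as a subgroup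
of `H`: the subgroup generated by all `N`-conjugates of elements of `S`. -/
def nclIn (k n : ℕ) (u' : FreeGroup (Fin n)) (N : Subgroup (Hgp k n u'))
    (S : Set (Hgp k n u')) : Subgroup (Hgp k n u') :=
  Subgroup.closure {h | ∃ g ∈ N, ∃ t ∈ S, h = g * t * g⁻¹}

/-- A reduced word is *cyclically reduced* if its first letter is not the inverse of its
last letter. -/
def IsCyclicallyReducedWord {X : Type*} (w : List (X × Bool)) : Prop :=
  ∀ a b : X × Bool, w.head? = some a → w.getLast? = some b → ¬(a.1 = b.1 ∧ a.2 = !b.2)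

/-! Setup: `H̃` is the free group on `{x, b}` (modelled as `FreeGroup Bool`, `true ↦ x`,
`false ↦ b`), `F` is the free group on `{y₁, …, yₙ}`, and
`H = H̃ *_{[xᵏ,b] = u⁻¹} F` is the amalgamated product over infinite cyclic subgroups,
realised as the pushout of the two maps `ℤ → H̃`, `ℤ → F` sending a generator of `ℤ` to
`[xᵏ,b]` and `u⁻¹` respectively. -/

/-- The word `[xᵏ,b] = x⁻ᵏb⁻¹xᵏb` in the free group on `{x, b}`. -/
def commWord (k : ℕ) : FreeGroup Bool :=
  ((FreeGroup.of true)⁻¹) ^ k * (FreeGroup.of false)⁻¹ * (FreeGroup.of true) ^ k *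
    FreeGroup.of false

/-- The two factors `H̃ = FreeGroup Bool` and `F = FreeGroup (Fin n)`. -/
def Fac (n : ℕ) : Bool → Type := fun i =>
  match i with
  | true => FreeGroup Bool
  | false => FreeGroup (Fin n)

instance (n : ℕ) : (i : Bool) → Group (Fac n i) := fun i =>
  match i with
  | true => inferInstanceAs (Group (FreeGroup Bool))
  | false => inferInstanceAs (Group (FreeGroup (Fin n)))

/-- The diagram of maps from the amalgamated copy of `ℤ` into the two factors, sending the
generator to `[xᵏ,b]` and to `u⁻¹` respectively. -/
def amalMaps (k n : ℕ) (u' : FreeGroup (Fin n)) :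
    ∀ i : Bool, Multiplicative ℤ →* Fac n i := fun i =>
  match i with
  | true => zpowersHom (FreeGroup Bool) (commWord k)
  | false => zpowersHom (FreeGroup (Fin n)) u'⁻¹

/-- The amalgamated product `H = H̃ *_{[xᵏ,b]=u⁻¹} F`. -/
abbrev Amal (k n : ℕ) (u' : FreeGroup (Fin n)) : Type :=
  Monoid.PushoutI (amalMaps k n u')

/-! `H` and `H̃ *_ℤ F` have the same presentation: generators `x, b, y₁, …, yₙ` and the single
relation `[xᵏ,b] = u⁻¹`, so their universal properties give mutually inverse homomorphisms.
Free groups are torsion-free and `[xᵏ,b] ≠ 1 ≠ u`, so both maps `ℤ → H̃`, `ℤ → F` are injective;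
hence `H̃` embeds in the amalgam, and via the isomorphism `⟨x, b⟩ ≤ H` is free on `x, b`. -/

open Function

theorem zpowersHom_injective {G : Type*} [Group G] [IsMulTorsionFree G] {g : G} (hg : g ≠ 1) :
    Injective (zpowersHom G g) := by
  intro m m' h
  rw [zpowersHom_apply, zpowersHom_apply, ← mul_inv_eq_one, ← zpow_sub,
    IsMulTorsionFree.zpow_eq_one_iff_right hg, sub_eq_zero] at h
  exact Multiplicative.toAdd.injective h

noncomputable def FreeGroupBasis.ofInjective {ι G : Type*} [Group G] {f : FreeGroup ι →* G}
    (hf : Injective f) : FreeGroupBasis ι f.range :=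
  .ofRepr (MonoidHom.ofInjective hf).symm

theorem FreeGroupBasis.ofInjective_apply {ι G : Type*} [Group G] {f : FreeGroup ι →* G}
    (hf : Injective f) (i : ι) : (FreeGroupBasis.ofInjective hf i : G) = f (FreeGroup.of i) :=
  rfl

theorem commWord_ne_one {k : ℕ} (hk : 1 ≤ k) : commWord k ≠ 1 := by
  let φ : FreeGroup Bool →* DihedralGroup 0 :=
    FreeGroup.lift fun c => if c then DihedralGroup.r 1 else DihedralGroup.sr 0
  have hφ : φ (commWord k) = DihedralGroup.r (-(2 * k : ZMod 0)) := by
    simp [φ, commWord, two_mul]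
  intro h
  rw [h, map_one, DihedralGroup.one_def] at hφ
  have h0 : (0 : ℤ) = -(2 * k) := DihedralGroup.r.inj hφ
  omega

namespace Hgp

variable (k n : ℕ) (u' : FreeGroup (Fin n))

theorem amalMaps_injective (hk : 1 ≤ k) (hu : u' ≠ 1) : ∀ i, Injective (amalMaps k n u' i)
  | true => zpowersHom_injective (G := FreeGroup Bool) (commWord_ne_one hk)
  | false => zpowersHom_injective (G := FreeGroup (Fin n)) (inv_ne_one.2 hu)

theorem relOfH_eq :
    relOfH k n u' = {FreeGroup.map Sum.inl (commWord k) * FreeGroup.map Sum.inr u'} := by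
  simp [relOfH, commWord]

/-- The map `H̃ → H`. -/
def xbHom : FreeGroup Bool →* Hgp k n u' :=
  (PresentedGroup.mk (relOfH k n u')).comp (FreeGroup.map Sum.inl)

def yHom : FreeGroup (Fin n) →* Hgp k n u' :=
  (PresentedGroup.mk (relOfH k n u')).comp (FreeGroup.map Sum.inr)

theorem xbHom_of (c : Bool) : xbHom k n u' (FreeGroup.of c) = PresentedGroup.of (.inl c) := by
  simp [xbHom, PresentedGroup.of]

theorem yHom_of (m : Fin n) : yHom k n u' (FreeGroup.of m) = PresentedGroup.of (.inr m) := by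
  simp [yHom, PresentedGroup.of]

theorem xbHom_commWord_mul_yHom : xbHom k n u' (commWord k) * yHom k n u' u' = 1 := by
  have : PresentedGroup.mk (relOfH k n u')
      (FreeGroup.map Sum.inl (commWord k) * FreeGroup.map Sum.inr u') = 1 :=
    (QuotientGroup.eq_one_iff _).2 (Subgroup.subset_normalClosure (by simp [relOfH_eq]))
  simpa [xbHom, yHom] using this

theorem amal_of_commWord_mul :
    Monoid.PushoutI.of (φ := amalMaps k n u') true (commWord k) *
      Monoid.PushoutI.of (φ := amalMaps k n u') false u' = 1 := by
  have h := (Monoid.PushoutI.of_apply_eq_base (amalMaps k n u') true (.ofAdd 1)).trans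
    (Monoid.PushoutI.of_apply_eq_base (amalMaps k n u') false (.ofAdd 1)).symm
  rw [show amalMaps k n u' true (.ofAdd 1) = commWord k from zpow_one _,
    show amalMaps k n u' false (.ofAdd 1) = u'⁻¹ from zpow_one _] at h
  rw [h]
  exact (congrArg (· * _) (map_inv _ u')).trans (inv_mul_cancel _)

def amalGen : Bool ⊕ Fin n → Amal k n u' :=
  Sum.elim (fun c => Monoid.PushoutI.of (φ := amalMaps k n u') true (FreeGroup.of c))
    (fun m => Monoid.PushoutI.of (φ := amalMaps k n u') false (FreeGroup.of m))

theorem lift_amalGen_comp_map_inl :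
    (FreeGroup.lift (amalGen k n u')).comp (FreeGroup.map Sum.inl) =
      Monoid.PushoutI.of (φ := amalMaps k n u') true := by
  ext; rfl

theorem lift_amalGen_comp_map_inr :
    (FreeGroup.lift (amalGen k n u')).comp (FreeGroup.map Sum.inr) =
      Monoid.PushoutI.of (φ := amalMaps k n u') false := by
  ext; rfl

theorem lift_amalGen_relator : ∀ r ∈ relOfH k n u', FreeGroup.lift (amalGen k n u') r = 1 := by
  rw [relOfH_eq]
  rintro _ rfl
  rw [map_mul, ← MonoidHom.comp_apply, lift_amalGen_comp_map_inl, ← MonoidHom.comp_apply,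
    lift_amalGen_comp_map_inr]
  exact amal_of_commWord_mul k n u'

def toAmal : Hgp k n u' →* Amal k n u' :=
  PresentedGroup.toGroup (lift_amalGen_relator k n u')

theorem toAmal_of (s : Bool ⊕ Fin n) : toAmal k n u' (PresentedGroup.of s) = amalGen k n u' s :=
  PresentedGroup.toGroup.of _

theorem toAmal_comp_mk :
    (toAmal k n u').comp (PresentedGroup.mk (relOfH k n u')) = FreeGroup.lift (amalGen k n u') :=
  rfl

theorem toAmal_comp_xbHom :
    (toAmal k n u').comp (xbHom k n u') = Monoid.PushoutI.of (φ := amalMaps k n u') true := by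
  rw [xbHom, ← MonoidHom.comp_assoc, toAmal_comp_mk, lift_amalGen_comp_map_inl]

theorem toAmal_comp_yHom :
    (toAmal k n u').comp (yHom k n u') = Monoid.PushoutI.of (φ := amalMaps k n u') false := by
  rw [yHom, ← MonoidHom.comp_assoc, toAmal_comp_mk, lift_amalGen_comp_map_inr]

def factorHom : ∀ i, Fac n i →* Hgp k n u'
  | true => xbHom k n u'
  | false => yHom k n u'

theorem factorHom_comp_amalMaps (i : Bool) :
    (factorHom k n u' i).comp (amalMaps k n u' i) =
      (factorHom k n u' true).comp (amalMaps k n u' true) := by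
  cases i
  · refine MonoidHom.ext_mint ?_
    show yHom k n u' (u'⁻¹ ^ (1 : ℤ)) = xbHom k n u' (commWord k ^ (1 : ℤ))
    rw [zpow_one, zpow_one, map_inv, eq_comm, ← mul_eq_one_iff_eq_inv]
    exact xbHom_commWord_mul_yHom k n u'
  · rfl

def ofAmal : Amal k n u' →* Hgp k n u' :=
  Monoid.PushoutI.lift (factorHom k n u') _ (factorHom_comp_amalMaps k n u')

theorem ofAmal_comp_of (i : Bool) :
    (ofAmal k n u').comp (Monoid.PushoutI.of (φ := amalMaps k n u') i) = factorHom k n u' i :=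
  MonoidHom.ext fun g =>
    Monoid.PushoutI.lift_of (φ := amalMaps k n u') _ _ (factorHom_comp_amalMaps k n u') g

theorem ofAmal_amalGen : ∀ s, ofAmal k n u' (amalGen k n u' s) = PresentedGroup.of s
  | .inl c => (DFunLike.congr_fun (ofAmal_comp_of k n u' true) (FreeGroup.of c)).trans
      (xbHom_of k n u' c)
  | .inr m => (DFunLike.congr_fun (ofAmal_comp_of k n u' false) (FreeGroup.of m)).trans
      (yHom_of k n u' m)

def amalEquiv : Hgp k n u' ≃* Amal k n u' :=
  MonoidHom.toMulEquiv (toAmal k n u') (ofAmal k n u')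
    (PresentedGroup.ext fun s =>
      (congrArg _ (toAmal_of k n u' s)).trans (ofAmal_amalGen k n u' s))
    (Monoid.PushoutI.hom_ext_nonempty fun
      | true => by rw [MonoidHom.comp_assoc, ofAmal_comp_of]; exact toAmal_comp_xbHom k n u'
      | false => by rw [MonoidHom.comp_assoc, ofAmal_comp_of]; exact toAmal_comp_yHom k n u')

theorem amalEquiv_of (s : Bool ⊕ Fin n) :
    amalEquiv k n u' (PresentedGroup.of s) = amalGen k n u' s :=
  toAmal_of k n u' s

theorem xbHom_injective (hk : 1 ≤ k) (hu : u' ≠ 1) : Injective (xbHom k n u') := by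
  have h : ⇑(xbHom k n u') =
      (amalEquiv k n u').symm ∘ Monoid.PushoutI.of (φ := amalMaps k n u') true :=
    funext fun g => (DFunLike.congr_fun (ofAmal_comp_of k n u' true) g).symm
  rw [h]
  exact (amalEquiv k n u').symm.injective.comp
    (Monoid.PushoutI.of_injective (amalMaps_injective k n u' hk hu) true)

theorem range_xbHom : (xbHom k n u').range = Subgroup.closure {xg k n u', bg k n u'} := by
  rw [MonoidHom.range_eq_map, ← FreeGroup.closure_range_of, MonoidHom.map_closure,
    ← Set.range_comp]
  congr 1
  ext g
  simp [xbHom_of, xg, bg, or_comm]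

end Hgp

theorem Hgp_amalgam_decomposition_general (k n : ℕ) (hk : 1 ≤ k)
    (u' : FreeGroup (Fin n)) (hu : u' ≠ 1) :
    (∃ basis : FreeGroupBasis Bool
        ↥(Subgroup.closure {xg k n u', bg k n u'}),
      (basis true : Hgp k n u') = xg k n u' ∧ (basis false : Hgp k n u') = bg k n u') ∧
    Function.Injective (zpowersHom (FreeGroup Bool) (commWord k)) ∧
    Function.Injective (zpowersHom (FreeGroup (Fin n)) u'⁻¹) ∧
    ∃ e : Hgp k n u' ≃* Amal k n u',
      e (xg k n u') = Monoid.PushoutI.of (φ := amalMaps k n u') true (FreeGroup.of true) ∧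
      e (bg k n u') = Monoid.PushoutI.of (φ := amalMaps k n u') true (FreeGroup.of false) ∧
      ∀ m : Fin n,
        e (yg k n u' m) = Monoid.PushoutI.of (φ := amalMaps k n u') false (FreeGroup.of m) := by
  have hinj := Hgp.amalMaps_injective k n u' hk hu
  let basis := (FreeGroupBasis.ofInjective (Hgp.xbHom_injective k n u' hk hu)).map
    (MulEquiv.subgroupCongr (Hgp.range_xbHom k n u'))
  have basis_apply (c : Bool) : (basis c : Hgp k n u') = PresentedGroup.of (.inl c) := by
    simp [basis, FreeGroupBasis.map_apply, FreeGroupBasis.ofInjective_apply, Hgp.xbHom_of]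
  exact ⟨⟨basis, basis_apply true, basis_apply false⟩, hinj true, hinj false,
    Hgp.amalEquiv k n u', Hgp.amalEquiv_of k n u' _, Hgp.amalEquiv_of k n u' _,
    fun _ => Hgp.amalEquiv_of k n u' _⟩

/-- (5.1): the subgroup `H̃ = ⟨x, b⟩` of `H = ⟨x, b, y₁,…,yₙ | [xᵏ,b]u⟩` is free of rank 2
(with free basis `{x, b}`), and `H` is (canonically isomorphic to) the amalgamated product
`H̃ *_{[xᵏ,b]=u⁻¹} F` of the free group `H̃` on `{x,b}` and the free group `F` on the `y`'s,
amalgamated over the infinite cyclic subgroups generated by `[xᵏ,b]` and `u⁻¹`. -/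
theorem Hgp_amalgam_decomposition (k n : ℕ) (hk : 1 ≤ k) (hn : 1 ≤ n)
    (u' : FreeGroup (Fin n)) (hu : u' ≠ 1) :
    (∃ basis : FreeGroupBasis Bool
        ↥(Subgroup.closure {xg k n u', bg k n u'}),
      (basis true : Hgp k n u') = xg k n u' ∧ (basis false : Hgp k n u') = bg k n u') ∧
    Function.Injective (zpowersHom (FreeGroup Bool) (commWord k)) ∧
    Function.Injective (zpowersHom (FreeGroup (Fin n)) u'⁻¹) ∧
    ∃ e : Hgp k n u' ≃* Amal k n u',
      e (xg k n u') = Monoid.PushoutI.of (φ := amalMaps k n u') true (FreeGroup.of true) ∧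
      e (bg k n u') = Monoid.PushoutI.of (φ := amalMaps k n u') true (FreeGroup.of false) ∧
      ∀ m : Fin n,
        e (yg k n u' m) = Monoid.PushoutI.of (φ := amalMaps k n u') false (FreeGroup.of m) :=
  Hgp_amalgam_decomposition_general k n hk u' hu
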